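/- Let e ⊆ V be a hyperedge with |e| ≥ 2 and F_e : 2^V → ℝ_+ the hypergraph cut function F_e(S) = 1 if ∅ ≠ S ∩ e ≠ e, else 0. Then the extreme points of the base polytope B(F_e) are exactly the vectors e_u − e_v for distinct u, v ∈ e, together with 0 when relevant; in particular every extreme point of B(F_e) is of the form e_u − e_v with u, v ∈ e (allowing u = v to give 0). -/

import Mathlib

/-! Every `w ∈ B(F_e)` vanishes off `e` (constraints of `{x}` and `V \ {x}`), has total mass `0`,
and its positive part has mass `P ≤ 1` (constraint of `{w > 0}`). Topping up `w⁺` and `w⁻` with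
mass `1 - P` at a common vertex of `e` writes `w` as a difference of two points of the simplex on
`e`, so `B(F_e)` is the convex hull of the vectors `e_u - e_v`, `u, v ∈ e`. Conversely, for `u ≠ v`
the point `e_u - e_v` is the only point of `B(F_e)` tight at both `{u}` and `V \ {v}`; since the
tight points of a constraint form a face, it is extreme. -/

open Finset
open scoped Pointwise

section

variable {V : Type*}

section basePolytope

variable [Fintype V]

def basePolytope (F : Finset V → ℝ) : Set (V → ℝ) :=
  {w | (∀ S : Finset V, ∑ x ∈ S, w x ≤ F S) ∧ ∑ x, w x = F univ}

variable {F : Finset V → ℝ} {w : V → ℝ}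

theorem convex_basePolytope (F : Finset V → ℝ) : Convex ℝ (basePolytope F) := by
  intro a ha b hb s t hs ht hst
  have hsum : ∀ S : Finset V, ∑ x ∈ S, (s • a + t • b) x =
      s * ∑ x ∈ S, a x + t * ∑ x ∈ S, b x := fun S => by
    simp [sum_add_distrib, mul_sum]
  refine ⟨fun S => ?_, ?_⟩
  · have hF : s * F S + t * F S = F S := by rw [← add_mul, hst, one_mul]
    rw [hsum]
    linarith [mul_le_mul_of_nonneg_left (ha.1 S) hs, mul_le_mul_of_nonneg_left (hb.1 S) ht]
  · rw [hsum, ha.2, hb.2, ← add_mul, hst, one_mul]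

theorem isExtreme_basePolytope_tight (S : Finset V) :
    IsExtreme ℝ (basePolytope F) {w ∈ basePolytope F | ∑ x ∈ S, w x = F S} := by
  refine ⟨fun w hw => hw.1, fun a ha b hb w hw hab => ⟨ha, ?_⟩⟩
  obtain ⟨s, t, hs, ht, hst, rfl⟩ := hab
  have h := hw.2
  simp only [Pi.add_apply, Pi.smul_apply, smul_eq_mul, sum_add_distrib, ← mul_sum] at h
  have hF : s * F S + t * F S = F S := by rw [← add_mul, hst, one_mul]
  refine le_antisymm (ha.1 S) (le_of_mul_le_mul_left ?_ hs)
  linarith [mul_le_mul_of_nonneg_left (hb.1 S) ht.le]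

theorem sum_posPart_le_of_mem_basePolytope (hw : w ∈ basePolytope F) :
    ∑ x, (w x)⁺ ≤ F {x | 0 < w x} := by
  simp only [posPart_eq_ite_lt, ← sum_filter]
  exact hw.1 _

theorem eq_single_sub_single_of_mem_basePolytope [DecidableEq V] (hF : ∀ S, F S ≤ 1)
    (hFuniv : F univ = 0) (hw : w ∈ basePolytope F) {u v : V} (huv : u ≠ v) (hu : w u = 1)
    (hv : ∑ x ∈ univ.erase v, w x = 1) : w = Pi.single u 1 - Pi.single v 1 := by
  have hwv : w v = -1 := by
    have := hw.2
    rw [hFuniv, ← add_sum_erase _ _ (mem_univ v), hv] at this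
    linarith
  ext x
  by_cases hxu : x = u
  · subst hxu; simp [hu, huv]
  by_cases hxv : x = v
  · subst hxv; simp [hwv, Ne.symm huv]
  have hle : w x ≤ 0 := by
    have := (hw.1 {u, x}).trans (hF _)
    rw [sum_pair (Ne.symm hxu), hu] at this
    linarith
  have hge : 0 ≤ w x := by
    have := (hw.1 ((univ.erase v).erase x)).trans (hF _)
    rw [sum_erase_eq_sub (mem_erase.2 ⟨hxv, mem_univ x⟩), hv] at this
    linarith
  simp [hxu, hxv, le_antisymm hle hge]

end basePolytope

section convexHull

variable [Fintype V] [DecidableEq V]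

theorem mem_convexHull_image_single {e : Finset V} {a : V → ℝ} (ha : 0 ≤ a)
    (hae : ∀ x ∉ e, a x = 0) (ha1 : ∑ x, a x = 1) :
    a ∈ convexHull ℝ ((fun u => Pi.single u (1 : ℝ)) '' e) := by
  have hsum : ∑ u ∈ e, a u = 1 := by
    rw [← ha1]
    exact sum_subset (subset_univ e) fun x _ hx => hae x hx
  have hdecomp : ∑ u ∈ e, a u • Pi.single u (1 : ℝ) = a := by
    ext x
    by_cases hx : x ∈ e <;> simp [Pi.single_apply, hx, hae]
  rw [← hdecomp]
  exact (convex_convexHull ℝ _).sum_mem (fun u _ => ha u) hsum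
    fun u hu => subset_convexHull ℝ _ ⟨u, hu, rfl⟩

theorem mem_convexHull_single_sub_single {e : Finset V} {w : V → ℝ} (he : e.Nonempty)
    (hwe : ∀ x ∉ e, w x = 0) (hw0 : ∑ x, w x = 0) (hw1 : ∑ x, (w x)⁺ ≤ 1) :
    w ∈ convexHull ℝ {w | ∃ u ∈ e, ∃ v ∈ e, w = Pi.single u 1 - Pi.single v 1} := by
  obtain ⟨u₀, hu₀⟩ := he
  set P := ∑ x, (w x)⁺
  have hneg : ∑ x, (w x)⁻ = P := by
    have h := congrArg (fun f : V → ℝ => ∑ x, f x) (posPart_sub_negPart w)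
    simp only [Pi.sub_apply, Pi.posPart_apply, Pi.negPart_apply, sum_sub_distrib, hw0] at h
    linarith
  have hpad : ∀ a : V → ℝ, 0 ≤ a → (∀ x ∉ e, a x = 0) → ∑ x, a x = P →
      a + (1 - P) • Pi.single u₀ 1 ∈ convexHull ℝ ((fun u => Pi.single u (1 : ℝ)) '' e) := by
    intro a ha hae haP
    refine mem_convexHull_image_single (add_nonneg ha (smul_nonneg (by linarith) ?_)) ?_ ?_
    · exact Pi.single_nonneg.2 zero_le_one
    · intro x hx
      have : x ≠ u₀ := fun h => hx (h ▸ hu₀)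
      simp [hae x hx, this]
    · simp [sum_add_distrib, haP, ← mul_sum]
  have hset : {w | ∃ u ∈ e, ∃ v ∈ e, w = Pi.single u 1 - Pi.single v 1} =
      (fun u => Pi.single u (1 : ℝ)) '' (e : Set V) -
        (fun u => Pi.single u (1 : ℝ)) '' (e : Set V) := by
    ext; simp [Set.mem_sub, eq_comm]
  rw [hset, convexHull_sub]
  refine ⟨_, hpad w⁺ (posPart_nonneg w) (fun x hx => by simp [hwe x hx]) rfl,
    _, hpad w⁻ (negPart_nonneg w) (fun x hx => by simp [hwe x hx]) hneg, ?_⟩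
  simp only [add_sub_add_right_eq_sub, posPart_sub_negPart]

end convexHull

def hyperedgeCut [DecidableEq V] (e S : Finset V) : ℝ :=
  if (S ∩ e).Nonempty ∧ S ∩ e ≠ e then 1 else 0

section hyperedgeCut

variable [DecidableEq V] {e S : Finset V}

theorem hyperedgeCut_nonneg : 0 ≤ hyperedgeCut e S := by
  unfold hyperedgeCut; split <;> norm_num

theorem hyperedgeCut_le_one : hyperedgeCut e S ≤ 1 := by
  unfold hyperedgeCut; split <;> norm_num

theorem hyperedgeCut_eq_zero_of_subset (h : e ⊆ S) : hyperedgeCut e S = 0 := by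
  simp [hyperedgeCut, inter_eq_right.2 h]

theorem hyperedgeCut_eq_zero_of_disjoint (h : Disjoint S e) : hyperedgeCut e S = 0 := by
  simp [hyperedgeCut, disjoint_iff_inter_eq_empty.1 h]

theorem hyperedgeCut_eq_one_of_mem_of_notMem {u v : V} (hu : u ∈ e) (huS : u ∈ S) (hv : v ∈ e)
    (hvS : v ∉ S) : hyperedgeCut e S = 1 :=
  if_pos ⟨⟨u, mem_inter.2 ⟨huS, hu⟩⟩, fun h => hvS (mem_inter.1 (h ▸ hv)).1⟩

variable [Fintype V]

theorem single_sub_single_mem_basePolytope {u v : V} (hu : u ∈ e) (hv : v ∈ e) :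
    Pi.single u 1 - Pi.single v 1 ∈ basePolytope (hyperedgeCut e) := by
  refine ⟨fun S => ?_, by simp [hyperedgeCut_eq_zero_of_subset (subset_univ e)]⟩
  simp only [Pi.sub_apply, sum_sub_distrib, sum_pi_single']
  split_ifs with huS hvS
  · simpa using hyperedgeCut_nonneg
  · rw [hyperedgeCut_eq_one_of_mem_of_notMem hu huS hv hvS]; norm_num
  · linarith [hyperedgeCut_nonneg (e := e) (S := S)]
  · simpa using hyperedgeCut_nonneg

theorem apply_eq_zero_of_mem_basePolytope_hyperedgeCut {w : V → ℝ}
    (hw : w ∈ basePolytope (hyperedgeCut e)) {x : V} (hx : x ∉ e) : w x = 0 := by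
  have hle : w x ≤ 0 := by
    simpa [hyperedgeCut_eq_zero_of_disjoint (disjoint_singleton_left.2 hx)] using hw.1 {x}
  have hge : 0 ≤ w x := by
    have h := hw.1 (univ.erase x)
    rw [sum_erase_eq_sub (mem_univ x), hw.2, hyperedgeCut_eq_zero_of_subset (subset_univ e),
      hyperedgeCut_eq_zero_of_subset fun y hy =>
        mem_erase.2 ⟨ne_of_mem_of_not_mem hy hx, mem_univ y⟩] at h
    linarith
  exact le_antisymm hle hge

theorem basePolytope_hyperedgeCut_eq_convexHull (he : e.Nonempty) :
    basePolytope (hyperedgeCut e) =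
      convexHull ℝ {w | ∃ u ∈ e, ∃ v ∈ e, w = Pi.single u 1 - Pi.single v 1} := by
  refine subset_antisymm (fun w hw => ?_) (convexHull_min ?_ (convex_basePolytope _))
  · refine mem_convexHull_single_sub_single he
      (fun x hx => apply_eq_zero_of_mem_basePolytope_hyperedgeCut hw hx) ?_
      ((sum_posPart_le_of_mem_basePolytope hw).trans hyperedgeCut_le_one)
    rw [hw.2, hyperedgeCut_eq_zero_of_subset (subset_univ e)]
  · rintro _ ⟨u, hu, v, hv, rfl⟩
    exact single_sub_single_mem_basePolytope hu hv

theorem single_sub_single_mem_extremePoints {u v : V} (hu : u ∈ e) (hv : v ∈ e) (huv : u ≠ v) :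
    Pi.single u 1 - Pi.single v 1 ∈ (basePolytope (hyperedgeCut e)).extremePoints ℝ := by
  have hFu : hyperedgeCut e {u} = 1 :=
    hyperedgeCut_eq_one_of_mem_of_notMem hu (mem_singleton_self u) hv (by simpa using huv.symm)
  have hFv : hyperedgeCut e (univ.erase v) = 1 :=
    hyperedgeCut_eq_one_of_mem_of_notMem hu (mem_erase.2 ⟨huv, mem_univ u⟩) hv (notMem_erase v univ)
  have hface := (isExtreme_basePolytope_tight {u}).inter
    (isExtreme_basePolytope_tight (F := hyperedgeCut e) (univ.erase v))
  rw [← isExtreme_singleton]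
  convert hface using 1
  ext w
  constructor
  · rintro rfl
    have hw := single_sub_single_mem_basePolytope hu hv
    refine ⟨⟨hw, ?_⟩, hw, ?_⟩
    · simp [hFu, huv.symm]
    · rw [hFv, sum_erase_eq_sub (mem_univ v), hw.2, hyperedgeCut_eq_zero_of_subset (subset_univ e)]
      simp [huv.symm]
  · rintro ⟨⟨hw, hwu⟩, -, hwv⟩
    rw [sum_singleton, hFu] at hwu
    exact eq_single_sub_single_of_mem_basePolytope (F := hyperedgeCut e)
      (fun _ => hyperedgeCut_le_one) (hyperedgeCut_eq_zero_of_subset (subset_univ e)) hw huv hwu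
      (hwv.trans hFv)

end hyperedgeCut

end

/-- For the cut function of a hyperedge `e` with `|e| ≥ 2`, every extreme point of
the base polytope is of the form `e_u − e_v` with `u, v ∈ e` (allowing `u = v`,
giving `0`), and every such vector with `u ≠ v` is an extreme point. -/
theorem extremePoints_hypergraph_cut {V : Type*} [Fintype V] [DecidableEq V]
    (e : Finset V) (he : 2 ≤ e.card)
    (F : Finset V → ℝ)
    (hF : ∀ S : Finset V, F S = if (S ∩ e).Nonempty ∧ S ∩ e ≠ e then 1 else 0) :
    let B : Set (V → ℝ) :=
      {w | (∀ S : Finset V, ∑ x ∈ S, w x ≤ F S) ∧ ∑ x, w x = F Finset.univ}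
    (Set.extremePoints ℝ B ⊆
      {w : V → ℝ | ∃ u ∈ e, ∃ v ∈ e, w = Pi.single u (1 : ℝ) - Pi.single v 1}) ∧
    (∀ u ∈ e, ∀ v ∈ e, u ≠ v →
      (Pi.single u (1 : ℝ) - Pi.single v 1) ∈ Set.extremePoints ℝ B) := by
  obtain rfl : F = hyperedgeCut e := funext hF
  have hne : e.Nonempty := card_pos.1 (by omega)
  refine ⟨?_, fun u hu v hv huv => single_sub_single_mem_extremePoints hu hv huv⟩
  change (basePolytope (hyperedgeCut e)).extremePoints ℝ ⊆ _
  rw [basePolytope_hyperedgeCut_eq_convexHull hne]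
  exact extremePoints_convexHull_subset
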